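/- For every k ≥ 1, the k-th power of the Jacobson radical of the convolution algebra A_n equals the linear span of {e_t : t ∈ PT_n, |dom t| − |im t| ≥ k}. -/

import Mathlib

/-- The monoid of partial functions on `{1,…,n}`, modeled as `Fin n → Option (Fin n)`,
under composition of partial functions (right to left). -/
abbrev PT (n : ℕ) := Fin n → Option (Fin n)

namespace PT

variable {n : ℕ}

/-- Composition of partial functions, right to left: `comp s t = s ∘ t`. -/
def comp (s t : PT n) : PT n := fun x => (t x).bind s

/-- The domain of a partial function. -/
def dom (t : PT n) : Finset (Fin n) := Finset.univ.filter fun x => (t x).isSome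

/-- The image (range) of a partial function. -/
def ran (t : PT n) : Finset (Fin n) := Finset.univ.filter fun y => ∃ x, t x = some y

/-- The identity partial function on the subset `X`. -/
def idOn (X : Finset (Fin n)) : PT n := fun x => if x ∈ X then some x else none

instance : Monoid (PT n) where
  mul := comp
  one := fun x => some x
  mul_assoc s t w := by
    funext x
    show (w x).bind (fun z => (t z).bind s) = ((w x).bind t).bind s
    exact (Option.bind_assoc (w x) t s).symm
  one_mul t := by
    funext x
    show (t x).bind (fun y => some y) = t x
    cases t x <;> rfl
  mul_one t := by
    funext x
    show (some x).bind t = t x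
    rfl

end PT

namespace PT

variable {n : ℕ}

lemma mem_dom {t : PT n} {x : Fin n} : x ∈ dom t ↔ (t x).isSome := by simp [dom]

lemma mem_ran {t : PT n} {y : Fin n} : y ∈ ran t ↔ ∃ x, t x = some y := by simp [ran]

lemma comp_assoc (s t w : PT n) : comp (comp s t) w = comp s (comp t w) := mul_assoc s t w

lemma dom_comp {s t : PT n} (h : dom s = ran t) : dom (comp s t) = dom t := by
  ext x
  rw [mem_dom, mem_dom]
  show ((t x).bind s).isSome ↔ _
  cases ht : t x with
  | none => simp
  | some a =>
    have ha : a ∈ dom s := by rw [h, mem_ran]; exact ⟨x, ht⟩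
    rw [mem_dom] at ha
    simpa using ha
  

lemma ran_comp {t w : PT n} (h : dom t = ran w) : ran (comp t w) = ran t := by
  ext y
  rw [mem_ran, mem_ran]
  constructor
  · rintro ⟨x, hx⟩
    rcases Option.bind_eq_some_iff.mp hx with ⟨a, _, hta⟩
    exact ⟨a, hta⟩
  · rintro ⟨a, hta⟩
    have ha : a ∈ ran w := by
      rw [← h, mem_dom]
      simp [hta]
    rcases mem_ran.mp ha with ⟨x, hx⟩
    exact ⟨x, by show (w x).bind t = some y; rw [hx]; exact hta⟩

lemma dom_idOn (X : Finset (Fin n)) : dom (idOn X) = X := by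
  ext x
  rw [mem_dom, idOn]
  by_cases h : x ∈ X <;> simp [h]

lemma ran_idOn (X : Finset (Fin n)) : ran (idOn X) = X := by
  ext y
  rw [mem_ran]
  constructor
  · rintro ⟨x, hx⟩
    unfold idOn at hx
    split at hx
    · cases Option.some_injective _ hx; assumption
    · exact absurd hx (by simp)
  · intro hy
    exact ⟨y, by unfold idOn; rw [if_pos hy]⟩

lemma comp_idOn {s : PT n} : comp s (idOn (dom s)) = s := by
  funext x
  show ((idOn (dom s)) x).bind s = s x
  unfold idOn
  by_cases h : x ∈ dom s
  · rw [if_pos h]; rfl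
  · rw [if_neg h]
    rw [mem_dom] at h
    cases hs : s x with
    | none => rfl
    | some a => rw [hs] at h; simp at h

lemma idOn_comp {t : PT n} : comp (idOn (ran t)) t = t := by
  funext x
  show (t x).bind (idOn (ran t)) = t x
  cases ht : t x with
  | none => rfl
  | some a =>
    show idOn (ran t) a = some a
    unfold idOn
    rw [if_pos (mem_ran.mpr ⟨x, ht⟩)]

end PT

/-- The convolution algebra `A_n` of the epimorphism category: the vector space with basis
`{e_t : t ∈ PT_n}` and multiplication `e_s · e_t = e_{s ∘ t}` if `dom s = im t`, else `0`. -/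
noncomputable def PTAlg (n : ℕ) : Type := PT n →₀ ℂ

namespace PTAlg

variable {n : ℕ}

noncomputable instance : AddCommGroup (PTAlg n) := inferInstanceAs (AddCommGroup (PT n →₀ ℂ))
noncomputable instance : Module ℂ (PTAlg n) := inferInstanceAs (Module ℂ (PT n →₀ ℂ))

/-- The coefficient of `t` in an element of `A_n`. -/
noncomputable def coeff (a : PTAlg n) : PT n → ℂ := fun t => (show PT n →₀ ℂ from a) t

/-- The basis element `e_t` of `A_n`. -/
noncomputable def e (t : PT n) : PTAlg n := show PT n →₀ ℂ from Finsupp.single t 1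

/-- Convolution: `e_s · e_t = e_{s ∘ t}` if `dom s = im t`, and `0` otherwise. -/
noncomputable instance : Mul (PTAlg n) :=
  ⟨fun a b =>
    show PT n →₀ ℂ from
      Finsupp.equivFunOnFinite.symm fun u =>
        ∑ p : PT n × PT n,
          if PT.dom p.1 = PT.ran p.2 ∧ PT.comp p.1 p.2 = u then coeff a p.1 * coeff b p.2
          else 0⟩

/-- The multiplicative unit of `A_n` is `∑_{X ⊆ {1,…,n}} e_{id_X}`. -/
noncomputable instance : One (PTAlg n) := ⟨∑ X : Finset (Fin n), e (PT.idOn X)⟩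

end PTAlg

namespace PTAlg

variable {n : ℕ}

open PT

lemma ext' {a b : PTAlg n} (h : ∀ u, coeff a u = coeff b u) : a = b := Finsupp.ext h

lemma coeff_mul (a b : PTAlg n) (u : PT n) :
    coeff (a * b) u =
      ∑ p : PT n × PT n,
        if dom p.1 = ran p.2 ∧ comp p.1 p.2 = u then coeff a p.1 * coeff b p.2 else 0 :=
  Finsupp.equivFunOnFinite_symm_apply_apply _ _

lemma coeff_add (a b : PTAlg n) (u : PT n) : coeff (a + b) u = coeff a u + coeff b u := rfl

lemma coeff_zero (u : PT n) : coeff (0 : PTAlg n) u = 0 := rfl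

lemma coeff_smul (r : ℂ) (a : PTAlg n) (u : PT n) : coeff (r • a) u = r * coeff a u := rfl

lemma coeff_e (t u : PT n) : coeff (e t) u = if t = u then 1 else 0 := Finsupp.single_apply

lemma coeff_one (u : PT n) :
    coeff (1 : PTAlg n) u = if u = idOn (dom u) then 1 else 0 := by
  show coeff (∑ X : Finset (Fin n), e (idOn X)) u = _
  have : ∀ (l : Finset (Finset (Fin n))), coeff (∑ X ∈ l, e (idOn X)) u
      = ∑ X ∈ l, coeff (e (idOn X)) u := by
    intro l
    induction l using Finset.induction_on with
    | empty => simp [coeff_zero]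
    | insert s₁ l₁ hx ih => rw [Finset.sum_insert hx, Finset.sum_insert hx, coeff_add, ih]
  rw [this]
  by_cases h : u = idOn (dom u)
  · rw [if_pos h]
    rw [Finset.sum_eq_single (dom u)]
    · rw [coeff_e, if_pos h.symm]
    · intro X _ hX
      rw [coeff_e, if_neg]
      intro hc
      apply hX
      rw [← dom_idOn X, hc]
    · intro habs; exact absurd (Finset.mem_univ _) habs
  · rw [if_neg h]
    apply Finset.sum_eq_zero
    intro X _
    rw [coeff_e, if_neg]
    intro hc
    apply h
    have : dom u = X := by rw [← hc, dom_idOn]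
    rw [this, hc]

end PTAlg

namespace PTAlg

variable {n : ℕ}
open PT

lemma left_distrib' (a b c : PTAlg n) : a * (b + c) = a * b + a * c := by
  apply ext'; intro u
  rw [coeff_add, coeff_mul, coeff_mul, coeff_mul, ← Finset.sum_add_distrib]
  apply Finset.sum_congr rfl
  intro p _
  split_ifs with h
  · rw [coeff_add]; ring
  · rw [add_zero]

lemma right_distrib' (a b c : PTAlg n) : (a + b) * c = a * c + b * c := by
  apply ext'; intro u
  rw [coeff_add, coeff_mul, coeff_mul, coeff_mul, ← Finset.sum_add_distrib]
  apply Finset.sum_congr rfl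
  intro p _
  split_ifs with h
  · rw [coeff_add]; ring
  · rw [add_zero]

lemma zero_mul' (a : PTAlg n) : 0 * a = 0 := by
  apply ext'; intro u
  rw [coeff_mul, coeff_zero]
  apply Finset.sum_eq_zero
  intro p _
  split_ifs with h
  · rw [coeff_zero, zero_mul]
  · rfl

lemma mul_zero' (a : PTAlg n) : a * 0 = 0 := by
  apply ext'; intro u
  rw [coeff_mul, coeff_zero]
  apply Finset.sum_eq_zero
  intro p _
  split_ifs with h
  · rw [coeff_zero, mul_zero]
  · rfl

lemma mul_one' (a : PTAlg n) : a * 1 = a := by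
  apply ext'
  intro u
  rw [coeff_mul]
  rw [Finset.sum_eq_single ((u, idOn (dom u)) : PT n × PT n)]
  · rw [if_pos ⟨by rw [ran_idOn], comp_idOn⟩, coeff_one, if_pos (by rw [dom_idOn]), mul_one]
  · rintro ⟨s, t⟩ _ hne
    dsimp only at hne ⊢
    split_ifs with hcond
    · obtain ⟨h1, h2⟩ := hcond
      rw [coeff_one]
      split_ifs with ht
      · exfalso
        apply hne
        rw [ht, ran_idOn] at h1
        rw [ht, ← h1, comp_idOn] at h2
        subst h2
        rw [Prod.mk.injEq]
        refine ⟨rfl, ?_⟩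
        rw [ht, h1]
      · rw [mul_zero]
    · rfl
  · intro habs; exact absurd (Finset.mem_univ _) habs

lemma one_mul' (a : PTAlg n) : 1 * a = a := by
  apply ext'
  intro u
  rw [coeff_mul]
  rw [Finset.sum_eq_single ((idOn (ran u), u) : PT n × PT n)]
  · rw [if_pos ⟨by rw [dom_idOn], idOn_comp⟩, coeff_one, if_pos (by rw [dom_idOn]), one_mul]
  · rintro ⟨s, t⟩ _ hne
    dsimp only at hne ⊢
    split_ifs with hcond
    · obtain ⟨h1, h2⟩ := hcond
      rw [coeff_one]
      split_ifs with hs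
      · exfalso
        apply hne
        rw [hs, h1, idOn_comp] at h2
        subst h2
        rw [Prod.mk.injEq]
        refine ⟨?_, rfl⟩
        rw [hs, h1]
      · rw [zero_mul]
    · rfl
  · intro habs; exact absurd (Finset.mem_univ _) habs

end PTAlg

namespace PTAlg

variable {n : ℕ}
open PT

lemma key_left (a b c : PTAlg n) (u w : PT n) :
    (∑ q1 : PT n, if dom q1 = ran w ∧ comp q1 w = u then coeff (a * b) q1 * coeff c w else 0)
      = ∑ s : PT n, ∑ t : PT n,
          if dom s = ran t ∧ dom t = ran w ∧ comp (comp s t) w = u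
          then coeff a s * coeff b t * coeff c w else 0 := by
  have step : ∀ q1 : PT n,
      (if dom q1 = ran w ∧ comp q1 w = u then coeff (a * b) q1 * coeff c w else 0)
        = ∑ s : PT n, ∑ t : PT n,
            if (dom s = ran t ∧ comp s t = q1) ∧ (dom q1 = ran w ∧ comp q1 w = u)
            then coeff a s * coeff b t * coeff c w else 0 := by
    intro q1
    by_cases h : dom q1 = ran w ∧ comp q1 w = u
    · rw [if_pos h, coeff_mul, Fintype.sum_prod_type, Finset.sum_mul]
      apply Finset.sum_congr rfl
      intro s _
      rw [Finset.sum_mul]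
      apply Finset.sum_congr rfl
      intro t _
      rw [ite_mul, zero_mul]
      by_cases h2 : dom s = ran t ∧ comp s t = q1
      · rw [if_pos h2, if_pos ⟨h2, h⟩]
      · rw [if_neg h2, if_neg (fun hc => h2 hc.1)]
    · rw [if_neg h]
      symm
      apply Finset.sum_eq_zero; intro s _
      apply Finset.sum_eq_zero; intro t _
      exact if_neg (fun hc => h hc.2)
  rw [Finset.sum_congr rfl (fun q1 _ => step q1), Finset.sum_comm]
  apply Finset.sum_congr rfl
  intro s _
  rw [Finset.sum_comm]
  apply Finset.sum_congr rfl
  intro t _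
  rw [Finset.sum_eq_single (comp s t)]
  · apply if_congr _ rfl rfl
    constructor
    · rintro ⟨⟨h1, -⟩, h2, h3⟩
      exact ⟨h1, by rw [← dom_comp h1]; exact h2, h3⟩
    · rintro ⟨h1, h2, h3⟩
      exact ⟨⟨h1, rfl⟩, by rw [dom_comp h1]; exact h2, h3⟩
  · intro q1 _ hne
    apply if_neg
    rintro ⟨⟨-, hq⟩, -⟩
    exact hne hq.symm
  · intro habs; exact absurd (Finset.mem_univ _) habs

lemma key_right (a b c : PTAlg n) (u s : PT n) :
    (∑ q2 : PT n, if dom s = ran q2 ∧ comp s q2 = u then coeff a s * coeff (b * c) q2 else 0)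
      = ∑ t : PT n, ∑ w : PT n,
          if dom s = ran t ∧ dom t = ran w ∧ comp (comp s t) w = u
          then coeff a s * coeff b t * coeff c w else 0 := by
  have step : ∀ q2 : PT n,
      (if dom s = ran q2 ∧ comp s q2 = u then coeff a s * coeff (b * c) q2 else 0)
        = ∑ t : PT n, ∑ w : PT n,
            if (dom t = ran w ∧ comp t w = q2) ∧ (dom s = ran q2 ∧ comp s q2 = u)
            then coeff a s * coeff b t * coeff c w else 0 := by
    intro q2
    by_cases h : dom s = ran q2 ∧ comp s q2 = u
    · rw [if_pos h, coeff_mul, Fintype.sum_prod_type, Finset.mul_sum]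
      apply Finset.sum_congr rfl
      intro t _
      rw [Finset.mul_sum]
      apply Finset.sum_congr rfl
      intro w _
      rw [mul_ite, mul_zero]
      by_cases h2 : dom t = ran w ∧ comp t w = q2
      · rw [if_pos h2, if_pos ⟨h2, h⟩, mul_assoc]
      · rw [if_neg h2, if_neg (fun hc => h2 hc.1)]
    · rw [if_neg h]
      symm
      apply Finset.sum_eq_zero; intro t _
      apply Finset.sum_eq_zero; intro w _
      exact if_neg (fun hc => h hc.2)
  rw [Finset.sum_congr rfl (fun q2 _ => step q2), Finset.sum_comm]
  apply Finset.sum_congr rfl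
  intro t _
  rw [Finset.sum_comm]
  apply Finset.sum_congr rfl
  intro w _
  rw [Finset.sum_eq_single (comp t w)]
  · apply if_congr _ rfl rfl
    constructor
    · rintro ⟨⟨h1, -⟩, h2, h3⟩
      refine ⟨by rw [← ran_comp h1]; exact h2, h1, ?_⟩
      rw [comp_assoc]; exact h3
    · rintro ⟨h1, h2, h3⟩
      exact ⟨⟨h2, rfl⟩, by rw [ran_comp h2]; exact h1, by rw [← comp_assoc]; exact h3⟩
  · intro q2 _ hne
    apply if_neg
    rintro ⟨⟨-, hq⟩, -⟩
    exact hne hq.symm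
  · intro habs; exact absurd (Finset.mem_univ _) habs

lemma coeff_mul_mul (a b c : PTAlg n) (u : PT n) :
    coeff (a * b * c) u =
      ∑ s : PT n, ∑ t : PT n, ∑ w : PT n,
        if dom s = ran t ∧ dom t = ran w ∧ comp (comp s t) w = u
        then coeff a s * coeff b t * coeff c w else 0 := by
  rw [coeff_mul, Fintype.sum_prod_type, Finset.sum_comm]
  calc (∑ w : PT n, ∑ q1 : PT n,
          if dom q1 = ran w ∧ comp q1 w = u then coeff (a * b) q1 * coeff c w else 0)
      = ∑ w : PT n, ∑ s : PT n, ∑ t : PT n,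
          if dom s = ran t ∧ dom t = ran w ∧ comp (comp s t) w = u
          then coeff a s * coeff b t * coeff c w else 0 :=
        Finset.sum_congr rfl fun w _ => key_left a b c u w
    _ = ∑ s : PT n, ∑ w : PT n, ∑ t : PT n,
          if dom s = ran t ∧ dom t = ran w ∧ comp (comp s t) w = u
          then coeff a s * coeff b t * coeff c w else 0 := Finset.sum_comm
    _ = ∑ s : PT n, ∑ t : PT n, ∑ w : PT n,
          if dom s = ran t ∧ dom t = ran w ∧ comp (comp s t) w = u
          then coeff a s * coeff b t * coeff c w else 0 :=
        Finset.sum_congr rfl fun s _ => Finset.sum_comm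

lemma coeff_mul_mul' (a b c : PTAlg n) (u : PT n) :
    coeff (a * (b * c)) u =
      ∑ s : PT n, ∑ t : PT n, ∑ w : PT n,
        if dom s = ran t ∧ dom t = ran w ∧ comp (comp s t) w = u
        then coeff a s * coeff b t * coeff c w else 0 := by
  rw [coeff_mul, Fintype.sum_prod_type]
  exact Finset.sum_congr rfl fun s _ => key_right a b c u s

lemma mul_assoc' (a b c : PTAlg n) : a * b * c = a * (b * c) :=
  ext' fun u => (coeff_mul_mul a b c u).trans (coeff_mul_mul' a b c u).symm

noncomputable instance : Ring (PTAlg n) :=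
  { (inferInstance : AddCommGroup (PTAlg n)) with
    mul := (· * ·)
    one := 1
    mul_assoc := mul_assoc'
    one_mul := one_mul'
    mul_one := mul_one'
    left_distrib := left_distrib'
    right_distrib := right_distrib'
    zero_mul := zero_mul'
    mul_zero := mul_zero' }

noncomputable instance : Algebra ℂ (PTAlg n) :=
  Algebra.ofModule
    (fun r x y => by
      apply ext'; intro u
      rw [coeff_smul, coeff_mul, coeff_mul, Finset.mul_sum]
      apply Finset.sum_congr rfl
      intro p _
      split_ifs with h
      · rw [coeff_smul]; ring
      · rw [mul_zero])
    (fun r x y => by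
      apply ext'; intro u
      rw [coeff_smul, coeff_mul, coeff_mul, Finset.mul_sum]
      apply Finset.sum_congr rfl
      intro p _
      split_ifs with h
      · rw [coeff_smul]; ring
      · rw [mul_zero])

end PTAlg

/-!
Let `S k` be the span of the `e t` whose defect `|dom t| - |im t|` is at least `k`. Defect is
additive along composable pairs, so `S k * S l ≤ S (k + l)` and `S (n + 1) = 0`; thus every
`y * x` with `x ∈ S 1` is nilpotent and `S 1` lies in the radical. Conversely, if `a` is in the
radical and `t` is injective, then `e (t⁻¹) * a` is nilpotent, so left multiplication by it has
trace zero; this trace is the number of `u` with `im u = dom t` times the coefficient of `e t` in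
`a`, so `a ∈ S 1`. Finally, merging two points of `dom t` with the same image writes a `t` of
defect `k + 1` as a composable product of one of defect `k` and one of defect `1`, whence
`S 1 ^ k = S k`.
-/

theorem Ideal.mem_jacobson_bot_of_forall_isNilpotent_mul {R : Type*} [Ring R] {x : R}
    (h : ∀ y, IsNilpotent (y * x)) : x ∈ Ideal.jacobson (⊥ : Ideal R) := by
  refine Ideal.mem_jacobson_iff.mpr fun y => ⟨↑(h y).isUnit_one_add.unit⁻¹, ?_⟩
  rw [Submodule.mem_bot, sub_eq_zero, mul_assoc, add_comm, ← mul_one_add]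
  exact (h y).isUnit_one_add.unit.inv_mul

theorem IsArtinianRing.isNilpotent_of_mem_jacobson_bot {R : Type*} [Ring R] [IsArtinianRing R]
    {x : R} (hx : x ∈ Ideal.jacobson (⊥ : Ideal R)) : IsNilpotent x := by
  obtain ⟨m, hm⟩ := IsArtinianRing.isNilpotent_jacobson_bot (R := R)
  exact ⟨m, by simpa [hm] using Submodule.pow_mem_pow _ hx m⟩

namespace PT

variable {n : ℕ}

open Finset

lemma mapsTo_dom (t : PT n) : Set.MapsTo t (dom t) ((ran t).map .some) := by
  intro x hx
  obtain ⟨a, ha⟩ := Option.isSome_iff_exists.mp (mem_dom.mp hx)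
  simpa [ha, mem_ran] using ⟨x, ha⟩

lemma surjOn_dom (t : PT n) : Set.SurjOn t (dom t) ((ran t).map .some) := by
  intro b hb
  obtain ⟨a, ha, rfl⟩ := Finset.mem_map.mp hb
  obtain ⟨x, hx⟩ := mem_ran.mp ha
  exact ⟨x, mem_dom.mpr (by simp [hx]), hx⟩

lemma card_ran_le_card_dom (t : PT n) : #(ran t) ≤ #(dom t) := by
  simpa using card_le_card_of_surjOn t (surjOn_dom t)

def IsInjective (t : PT n) : Prop := ∀ ⦃x y a⦄, t x = some a → t y = some a → x = y

lemma isInjective_of_card_dom_le {t : PT n} (h : #(dom t) ≤ #(ran t)) : IsInjective t := by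
  have hinj := injOn_of_surjOn_of_card_le t (mapsTo_dom t) (surjOn_dom t) (by simpa using h)
  intro x y a hx hy
  exact hinj (mem_dom.mpr (by simp [hx])) (mem_dom.mpr (by simp [hy])) (hx.trans hy.symm)

lemma exists_comp_eq_of_card_ran_lt {t : PT n} (h : #(ran t) < #(dom t)) :
    ∃ s r : PT n, dom s = ran r ∧ comp s r = t ∧ #(ran r) + 1 = #(dom r) := by
  obtain ⟨x, hx, x', hx', hne, htx⟩ :=
    exists_ne_map_eq_of_card_lt_of_maps_to (by simpa using h) (mapsTo_dom t)
  rw [mem_dom] at hx hx'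
  set r := Function.update (idOn (dom t)) x' (some x)
  have hdom_r : dom r = dom t := by
    ext z; by_cases hz : z = x' <;> simp_all [r, mem_dom, idOn]
  have hran_r : ran r = (dom t).erase x' := by
    ext z
    simp only [r, mem_ran, mem_erase, mem_dom, idOn, Function.update_apply]
    constructor
    · rintro ⟨w, hw⟩
      by_cases hw' : w = x'
      · simp only [hw', if_true, Option.some.injEq] at hw
        exact hw ▸ ⟨hne, hx⟩
      · simp only [hw', if_false] at hw
        split_ifs at hw with hwd
        · cases hw; exact ⟨hw', hwd⟩
    · rintro ⟨hz, hzd⟩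
      exact ⟨z, by simp [hz, hzd]⟩
  refine ⟨Function.update t x' none, r, ?_, ?_, ?_⟩
  · rw [hran_r]; ext z; by_cases hz : z = x' <;> simp_all [mem_dom]
  · funext z
    by_cases hz : z = x'
    · subst hz; simp [r, comp, Function.update_apply, hne, htx]
    · by_cases hzd : (t z).isSome
      · simp [r, comp, hz, idOn, mem_dom, hzd]
      · simp_all [r, comp, idOn, mem_dom]
  · rw [hdom_r, hran_r, card_erase_of_mem (mem_dom.mpr hx')]
    have := card_pos.mpr ⟨x', mem_dom.mpr hx'⟩
    omega

noncomputable def pinv (t : PT n) : PT n := fun y =>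
  if h : ∃ x, t x = some y then some h.choose else none

lemma pinv_apply_of_apply_eq {t : PT n} (ht : IsInjective t) {x y : Fin n} (h : t x = some y) :
    pinv t y = some x := by
  have hex : ∃ x, t x = some y := ⟨x, h⟩
  rw [pinv, dif_pos hex, ht hex.choose_spec h]

lemma dom_pinv (t : PT n) : dom (pinv t) = ran t := by
  ext y
  by_cases h : ∃ x, t x = some y <;> simp [mem_dom, mem_ran, pinv, h]

lemma ran_pinv {t : PT n} (ht : IsInjective t) : ran (pinv t) = dom t := by
  ext x
  rw [mem_ran, mem_dom, Option.isSome_iff_exists]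
  constructor
  · rintro ⟨y, hy⟩
    by_cases h : ∃ x, t x = some y
    · rw [pinv, dif_pos h, Option.some_inj] at hy
      exact ⟨y, hy ▸ h.choose_spec⟩
    · simp [pinv, h] at hy
  · rintro ⟨y, hy⟩
    exact ⟨y, pinv_apply_of_apply_eq ht hy⟩

lemma comp_pinv (t : PT n) : comp t (pinv t) = idOn (ran t) := by
  funext y
  by_cases h : ∃ x, t x = some y
  · simp [comp, pinv, idOn, h, mem_ran, h.choose_spec]
  · simp [comp, pinv, idOn, h, mem_ran]

lemma pinv_comp {t : PT n} (ht : IsInjective t) : comp (pinv t) t = idOn (dom t) := by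
  funext x
  cases hx : t x with
  | none => simp [comp, idOn, mem_dom, hx]
  | some y => simp [comp, idOn, mem_dom, hx, pinv_apply_of_apply_eq ht hx]

lemma dom_pinv_eq_and_pinv_comp_eq_idOn_iff {t : PT n} (ht : IsInjective t) {p : PT n}
    {X : Finset (Fin n)} :
    dom (pinv t) = ran p ∧ comp (pinv t) p = idOn X ↔ p = t ∧ X = dom t := by
  constructor
  · rintro ⟨hdom, hcomp⟩
    have hX : X = dom t := by rw [← ran_idOn X, ← hcomp, ran_comp hdom, ran_pinv ht]
    refine ⟨?_, hX⟩
    calc p = comp (idOn (ran p)) p := idOn_comp.symm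
      _ = comp (comp t (pinv t)) p := by rw [comp_pinv, ← hdom, dom_pinv]
      _ = t := by rw [comp_assoc, hcomp, hX, comp_idOn]
  · rintro ⟨rfl, rfl⟩
    exact ⟨dom_pinv p, pinv_comp ht⟩

lemma eq_idOn_of_comp_eq {s t : PT n} (hdom : dom s = ran t) (hcomp : comp s t = t) :
    s = idOn (ran t) := by
  funext y
  by_cases hy : y ∈ ran t
  · obtain ⟨x, hx⟩ := mem_ran.mp hy
    have := congrFun hcomp x
    simp only [comp, hx, Option.bind_some] at this
    simp [idOn, hy, this]
  · rw [← hdom, mem_dom, Option.not_isSome_iff_eq_none] at hy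
    simp [idOn, ← hdom, mem_dom, hy]

end PT

namespace PTAlg

variable {n : ℕ}

open PT Finset

noncomputable def basis : Module.Basis (PT n) ℂ (PTAlg n) := Finsupp.basisSingleOne

lemma basis_apply (t : PT n) : basis t = e t := rfl

lemma basis_repr_apply (x : PTAlg n) (t : PT n) : basis.repr x t = coeff x t := rfl

noncomputable instance : Module.Free ℂ (PTAlg n) := .of_basis basis

noncomputable instance : Module.Finite ℂ (PTAlg n) := .of_basis basis

instance : IsArtinianRing (PTAlg n) := isArtinian_of_tower ℂ inferInstance

lemma mem_span_e_iff {P : PT n → Prop} {x : PTAlg n} :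
    x ∈ Submodule.span ℂ {y | ∃ t, P t ∧ y = e t} ↔ ∀ t, coeff x t ≠ 0 → P t := by
  have : {y | ∃ t, P t ∧ y = e t} = basis '' {t | P t} := by
    ext; simp [basis_apply, eq_comm]
  rw [this, basis.mem_span_image]
  simp [Set.subset_def, basis_repr_apply]

lemma coeff_e_mul (s : PT n) (b : PTAlg n) (u : PT n) :
    coeff (e s * b) u = ∑ p : PT n, if dom s = ran p ∧ comp s p = u then coeff b p else 0 := by
  rw [coeff_mul, Fintype.sum_prod_type, sum_eq_single s]
  · simp [coeff_e]
  · intro s' _ hs'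
    simp [coeff_e, Ne.symm hs']
  · simp

lemma coeff_mul_e (b : PTAlg n) (t : PT n) (u : PT n) :
    coeff (b * e t) u = ∑ p : PT n, if dom p = ran t ∧ comp p t = u then coeff b p else 0 := by
  rw [coeff_mul, Fintype.sum_prod_type]
  refine sum_congr rfl fun p _ => ?_
  rw [sum_eq_single t]
  · simp [coeff_e]
  · intro t' _ ht'
    simp [coeff_e, Ne.symm ht']
  · simp

lemma e_mul_e {s t : PT n} (h : dom s = ran t) : e s * e t = e (comp s t) := by
  refine ext' fun u => ?_
  rw [coeff_e_mul, sum_eq_single t]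
  · by_cases hu : comp s t = u <;> simp [coeff_e, h, hu]
  · intro t' _ ht'
    simp [coeff_e, Ne.symm ht']
  · simp

lemma exists_of_coeff_mul_ne_zero {x y : PTAlg n} {u : PT n} (h : coeff (x * y) u ≠ 0) :
    ∃ s t : PT n, dom s = ran t ∧ comp s t = u ∧ coeff x s ≠ 0 ∧ coeff y t ≠ 0 := by
  rw [coeff_mul] at h
  obtain ⟨⟨s, t⟩, -, hst⟩ := exists_ne_zero_of_sum_ne_zero h
  by_cases hc : dom s = ran t ∧ comp s t = u
  · rw [if_pos hc] at hst
    exact ⟨s, t, hc.1, hc.2, left_ne_zero_of_mul hst, right_ne_zero_of_mul hst⟩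
  · exact absurd (if_neg hc) hst

lemma coeff_mul_e_self (x : PTAlg n) (t : PT n) : coeff (x * e t) t = coeff x (idOn (ran t)) := by
  rw [coeff_mul_e, sum_eq_single (idOn (ran t))]
  · rw [if_pos ⟨dom_idOn _, idOn_comp⟩]
  · intro s _ hs
    exact if_neg fun h => hs (eq_idOn_of_comp_eq h.1 h.2)
  · simp

lemma trace_mulLeft (x : PTAlg n) :
    LinearMap.trace ℂ (PTAlg n) (LinearMap.mulLeft ℂ x) =
      ∑ t : PT n, coeff x (idOn (ran t)) := by
  rw [LinearMap.trace_eq_matrix_trace ℂ basis, Matrix.trace]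
  refine sum_congr rfl fun t _ => ?_
  rw [Matrix.diag_apply, LinearMap.toMatrix_apply, LinearMap.mulLeft_apply, basis_apply,
    basis_repr_apply, coeff_mul_e_self]

lemma coeff_e_pinv_mul_idOn {t : PT n} (ht : IsInjective t) (a : PTAlg n) (X : Finset (Fin n)) :
    coeff (e (pinv t) * a) (idOn X) = if X = dom t then coeff a t else 0 := by
  simp_rw [coeff_e_mul, dom_pinv_eq_and_pinv_comp_eq_idOn_iff ht, ite_and]
  simp

lemma trace_mulLeft_e_pinv_mul {t : PT n} (ht : IsInjective t) (a : PTAlg n) :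
    LinearMap.trace ℂ (PTAlg n) (LinearMap.mulLeft ℂ (e (pinv t) * a)) =
      #{u : PT n | ran u = dom t} * coeff a t := by
  rw [trace_mulLeft]
  simp [coeff_e_pinv_mul_idOn ht, sum_ite]

lemma coeff_eq_zero_of_mem_jacobson {a : PTAlg n}
    (ha : a ∈ Ideal.jacobson (⊥ : Ideal (PTAlg n))) {t : PT n} (ht : #(dom t) ≤ #(ran t)) :
    coeff a t = 0 := by
  have hinj := isInjective_of_card_dom_le ht
  have hnil : IsNilpotent (e (pinv t) * a) :=
    IsArtinianRing.isNilpotent_of_mem_jacobson_bot (Ideal.mul_mem_left _ _ ha)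
  have htrace := LinearMap.isNilpotent_trace_of_isNilpotent
    ((LinearMap.isNilpotent_mulLeft_iff ℂ _).mpr hnil)
  rw [trace_mulLeft_e_pinv_mul hinj, isNilpotent_iff_eq_zero, mul_eq_zero] at htrace
  have hid : idOn (dom t) ∈ ({u : PT n | ran u = dom t} : Finset (PT n)) := by simp [ran_idOn]
  exact htrace.resolve_left (Nat.cast_ne_zero.mpr (card_ne_zero_of_mem hid))

noncomputable def defectSpan (n k : ℕ) : Submodule ℂ (PTAlg n) :=
  Submodule.span ℂ {x | ∃ t : PT n, #(ran t) + k ≤ #(dom t) ∧ x = e t}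

lemma mem_defectSpan {k : ℕ} {x : PTAlg n} :
    x ∈ defectSpan n k ↔ ∀ t, coeff x t ≠ 0 → #(ran t) + k ≤ #(dom t) :=
  mem_span_e_iff

lemma mem_defectSpan_zero (x : PTAlg n) : x ∈ defectSpan n 0 :=
  mem_defectSpan.mpr fun t _ => card_ran_le_card_dom t

lemma mul_mem_defectSpan {k l : ℕ} {x y : PTAlg n} (hx : x ∈ defectSpan n k)
    (hy : y ∈ defectSpan n l) : x * y ∈ defectSpan n (k + l) := by
  rw [mem_defectSpan] at hx hy ⊢
  intro u hu
  obtain ⟨s, t, hst, rfl, hs, ht⟩ := exists_of_coeff_mul_ne_zero hu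
  have hs' := hx s hs
  have ht' := hy t ht
  rw [hst] at hs'
  rw [ran_comp hst, dom_comp hst]
  omega

lemma pow_mem_defectSpan {x : PTAlg n} (hx : x ∈ defectSpan n 1) (m : ℕ) :
    x ^ m ∈ defectSpan n m := by
  induction m with
  | zero => exact mem_defectSpan_zero _
  | succ m ih => rw [pow_succ]; exact mul_mem_defectSpan ih hx

lemma defectSpan_eq_bot {k : ℕ} (hk : n < k) : defectSpan n k = ⊥ := by
  refine eq_bot_iff.mpr fun x hx => (Submodule.mem_bot ℂ).mpr (ext' fun t => ?_)
  by_contra h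
  have := mem_defectSpan.mp hx t h
  have : #(dom t) ≤ n := by simpa using card_le_univ (dom t)
  omega

lemma isNilpotent_of_mem_defectSpan_one {x : PTAlg n} (hx : x ∈ defectSpan n 1) :
    IsNilpotent x :=
  ⟨n + 1, by simpa [defectSpan_eq_bot n.lt_succ_self] using pow_mem_defectSpan hx (n + 1)⟩

lemma jacobson_eq_defectSpan_one :
    (Ideal.jacobson (⊥ : Ideal (PTAlg n))).restrictScalars ℂ = defectSpan n 1 := by
  refine le_antisymm (fun a ha => mem_defectSpan.mpr fun t ht => ?_) fun x hx => ?_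
  · by_contra h
    exact ht (coeff_eq_zero_of_mem_jacobson ha (by omega))
  · refine Ideal.mem_jacobson_bot_of_forall_isNilpotent_mul fun y => ?_
    have hyx := mul_mem_defectSpan (mem_defectSpan_zero y) hx
    rw [zero_add] at hyx
    exact isNilpotent_of_mem_defectSpan_one hyx

lemma defectSpan_mul_defectSpan_one (k : ℕ) :
    defectSpan n k * defectSpan n 1 = defectSpan n (k + 1) := by
  refine le_antisymm (Submodule.mul_le.mpr fun x hx y hy => mul_mem_defectSpan hx hy) ?_
  refine Submodule.span_le.mpr ?_
  rintro _ ⟨t, ht, rfl⟩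
  obtain ⟨s, r, hsr, rfl, hr⟩ := exists_comp_eq_of_card_ran_lt (t := t) (by omega)
  rw [← e_mul_e hsr]
  refine Submodule.mul_mem_mul (Submodule.subset_span ⟨s, ?_, rfl⟩)
    (Submodule.subset_span ⟨r, hr.le, rfl⟩)
  rw [ran_comp hsr, dom_comp hsr] at ht
  rw [hsr]
  omega

lemma defectSpan_one_pow {k : ℕ} (hk : 1 ≤ k) : defectSpan n 1 ^ k = defectSpan n k := by
  induction k, hk using Nat.le_induction with
  | base => exact pow_one _
  | succ k _ ih => rw [pow_succ, ih, defectSpan_mul_defectSpan_one]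

end PTAlg

open PT PTAlg in
/-- For every `k ≥ 1`, the `k`-th power of the Jacobson radical of the
convolution algebra `A_n` is the linear span of `{e_t : |dom t| − |im t| ≥ k}`. -/
theorem radical_power_of_convolution_algebra (n k : ℕ) (hk : 1 ≤ k) :
    (Submodule.restrictScalars ℂ (Ideal.jacobson (⊥ : Ideal (PTAlg n)))) ^ k =
      Submodule.span ℂ {x : PTAlg n | ∃ t : PT n, (ran t).card + k ≤ (dom t).card ∧ x = e t} := by
  rw [jacobson_eq_defectSpan_one, defectSpan_one_pow hk, defectSpan]
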